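/- Every d-graph with odd dimension d has Euler characteristic zero. -/

import Mathlib

/-!
Write `ε(s) = (-1)^|s|`, so that `χ(G) = -∑ ε(s)` over the simplices `s` of `G`. Removing `s`
from the simplices that contain it is a bijection onto the simplices of the link of `s`
together with `∅`, hence `∑_{t ⊇ s} ε(t) = ε(s) (1 - χ(link s))`. For `s = {x}` this is
`χ(G) = χ(G - x) + 1 - χ(S(x))`, which gives `χ = 1` for contractible graphs and
`χ = 1 + (-1)^d` for `d`-spheres. In a `d`-graph the link of `s` is a `(d - |s|)`-sphere, so
`∑_{t ⊇ s} ε(t) = -(-1)^d` for every simplex `s`. Summing `ε(s) ∑_{t ⊇ s} ε(t)` over `s` and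
exchanging the sums, with `∑_{∅ ≠ s ⊆ t} ε(s) = -1`, yields `χ(G) = (-1)^d χ(G)`, which forces
`χ(G) = 0` when `d` is odd.
-/

attribute [local instance] Classical.propDecidable

noncomputable section

/-- A finite simple graph on a vertex type `V`: a finite vertex set together with a
symmetric, irreflexive adjacency relation supported on the vertex set. -/
structure FSGraph (V : Type) where
  verts : Finset V
  Adj : V → V → Prop
  symm : ∀ {a b}, Adj a b → Adj b a
  loopless : ∀ a, ¬ Adj a a
  supp : ∀ {a b}, Adj a b → a ∈ verts ∧ b ∈ verts

namespace FSGraph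

variable {V : Type}

/-- The subgraph induced by the set of vertices satisfying `P`. -/
def induce (G : FSGraph V) (P : V → Prop) : FSGraph V where
  verts := G.verts.filter P
  Adj a b := G.Adj a b ∧ P a ∧ P b
  symm h := ⟨G.symm h.1, h.2.2, h.2.1⟩
  loopless a h := G.loopless a h.1
  supp h := ⟨Finset.mem_filter.mpr ⟨(G.supp h.1).1, h.2.1⟩,
             Finset.mem_filter.mpr ⟨(G.supp h.1).2, h.2.2⟩⟩

/-- The unit sphere `S(x)`: the subgraph induced by the neighbours of `x`. -/
def sphere (G : FSGraph V) (x : V) : FSGraph V := G.induce (fun y => G.Adj x y)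

/-- `G - x`: the subgraph induced by all vertices different from `x`. -/
def remove (G : FSGraph V) (x : V) : FSGraph V := G.induce (fun y => y ≠ x)

/-- Contractibility (in the sense of Evako/Knill): the one-point graph `K₁` is
contractible, and a graph is contractible if some vertex `x` has both `S(x)` and
`G - x` contractible.  The empty graph is not contractible. -/
inductive Contractible : FSGraph V → Prop
  | single (G : FSGraph V) (x : V) (h : G.verts = {x}) : Contractible G
  | step (G : FSGraph V) (x : V) (hx : x ∈ G.verts)
      (hS : Contractible (G.sphere x)) (hR : Contractible (G.remove x)) :
      Contractible G

/-- `IsSphere d G`: `G` is a `d`-sphere.  The empty graph is the `(-1)`-sphere; for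
`d ≥ 0`, a `d`-sphere is a nonempty graph all of whose unit spheres are
`(d-1)`-spheres (i.e. a `d`-graph) which becomes contractible after removing some
vertex. -/
inductive IsSphere : ℤ → FSGraph V → Prop
  | empty (G : FSGraph V) (h : G.verts = ∅) : IsSphere (-1) G
  | succ (d : ℤ) (G : FSGraph V) (hd : 0 ≤ d) (hne : G.verts.Nonempty)
      (hunit : ∀ x ∈ G.verts, IsSphere (d - 1) (G.sphere x))
      (hpunct : ∃ x ∈ G.verts, Contractible (G.remove x)) :
      IsSphere d G

/-- A `d`-graph: a nonempty graph all of whose unit spheres are `(d-1)`-spheres. -/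
def IsDGraph (d : ℤ) (G : FSGraph V) : Prop :=
  G.verts.Nonempty ∧ ∀ x ∈ G.verts, IsSphere (d - 1) (G.sphere x)

/-- A `d`-ball: a graph of the form `G - x` with `G` a `d`-sphere and `x` a vertex. -/
def IsBall (d : ℤ) (B : FSGraph V) : Prop :=
  ∃ (G : FSGraph V) (x : V), IsSphere d G ∧ x ∈ G.verts ∧ B = G.remove x

/-- `f` is locally injective (a coloring): adjacent vertices get different values. -/
def LocallyInjective (G : FSGraph V) (f : V → ℝ) : Prop :=
  ∀ a b, G.Adj a b → f a ≠ f b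

/-- `S_f^-(x)`: the subgraph of `S(x)` induced by `{y ∈ S(x) : f y < f x}`. -/
def subSphere (G : FSGraph V) (f : V → ℝ) (x : V) : FSGraph V :=
  (G.sphere x).induce (fun y => f y < f x)

/-- `S_f^+(x)`: the subgraph of `S(x)` induced by `{y ∈ S(x) : f y > f x}`. -/
def supSphere (G : FSGraph V) (f : V → ℝ) (x : V) : FSGraph V :=
  (G.sphere x).induce (fun y => f x < f y)

/-- `x` is a critical point of `f` if at least one of `S_f^-(x)`, `S_f^+(x)` is
not contractible. -/
def IsCritical (G : FSGraph V) (f : V → ℝ) (x : V) : Prop :=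
  ¬ Contractible (G.subSphere f x) ∨ ¬ Contractible (G.supSphere f x)

/-- `f` has exactly two critical points on the vertex set of `G`. -/
def ExactlyTwoCriticalPoints (G : FSGraph V) (f : V → ℝ) : Prop :=
  ∃ a b, a ∈ G.verts ∧ b ∈ G.verts ∧ a ≠ b ∧
    G.IsCritical f a ∧ G.IsCritical f b ∧
    ∀ x ∈ G.verts, G.IsCritical f x → x = a ∨ x = b

/-- A simplex of `G`: a nonempty complete subgraph, given by its vertex set. -/
def IsSimplex (G : FSGraph V) (s : Finset V) : Prop :=
  s.Nonempty ∧ s ⊆ G.verts ∧ ∀ a ∈ s, ∀ b ∈ s, a ≠ b → G.Adj a b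

/-- The finite set of simplices (nonempty complete subgraphs) of `G`. -/
def simplices (G : FSGraph V) : Finset (Finset V) :=
  G.verts.powerset.filter (fun s => G.IsSimplex s)

/-- The Barycentric refinement `G'`: vertices are the simplices of `G`, two simplices
being adjacent when one is a proper subset of the other. -/
def barycentric (G : FSGraph V) : FSGraph (Finset V) where
  verts := G.simplices
  Adj s t := G.IsSimplex s ∧ G.IsSimplex t ∧ (s ⊂ t ∨ t ⊂ s)
  symm h := ⟨h.2.1, h.1, h.2.2.symm⟩
  loopless s h := by
    rcases h.2.2 with h' | h' <;> exact ssubset_irrefl s h'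
  supp {s t} h :=
    ⟨Finset.mem_filter.mpr ⟨Finset.mem_powerset.mpr h.1.2.1, h.1⟩,
     Finset.mem_filter.mpr ⟨Finset.mem_powerset.mpr h.2.1.2.1, h.2.1⟩⟩

/-- The level surface `{f = c}` in the Barycentric refinement `G'`: the subgraph of
`G'` induced by the simplices on which `f - c` takes both positive and negative
values. -/
def levelSurface (G : FSGraph V) (f : V → ℝ) (c : ℝ) : FSGraph (Finset V) :=
  G.barycentric.induce (fun s => (∃ a ∈ s, f a < c) ∧ (∃ b ∈ s, c < f b))

/-- `{f ≤ c}` in `G'`: the subgraph of `G'` induced by the simplices on which `f < c`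
everywhere, together with those on which `f - c` takes both signs. -/
def subLevel (G : FSGraph V) (f : V → ℝ) (c : ℝ) : FSGraph (Finset V) :=
  G.barycentric.induce
    (fun s => (∀ a ∈ s, f a < c) ∨ ((∃ a ∈ s, f a < c) ∧ (∃ b ∈ s, c < f b)))

/-- `{f ≥ c}` in `G'`: the subgraph of `G'` induced by the simplices on which `f > c`
everywhere, together with those on which `f - c` takes both signs. -/
def supLevel (G : FSGraph V) (f : V → ℝ) (c : ℝ) : FSGraph (Finset V) :=
  G.barycentric.induce
    (fun s => (∀ a ∈ s, c < f a) ∨ ((∃ a ∈ s, f a < c) ∧ (∃ b ∈ s, c < f b)))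

/-- The center manifold `B_f(x) = {f = f x}` inside the Barycentric refinement
`S(x)'` of the unit sphere `S(x)`. -/
def centerManifold (G : FSGraph V) (f : V → ℝ) (x : V) : FSGraph (Finset V) :=
  (G.sphere x).levelSurface f (f x)

/-- Euler characteristic: `χ(G) = Σ_k (-1)^k c_k(G)` where `c_k(G)` counts the
complete subgraphs with `k+1` vertices; equivalently the sum of `(-1)^(|s|-1)` over
all simplices `s`. -/
def euler (G : FSGraph V) : ℤ :=
  ∑ s ∈ G.simplices, (-1 : ℤ) ^ (s.card - 1)

lemma ext {G H : FSGraph V} (hverts : G.verts = H.verts)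
    (hadj : ∀ a b, G.Adj a b ↔ H.Adj a b) : G = H := by
  cases G; cases H
  congr
  ext a b
  exact hadj a b

lemma mem_simplices {G : FSGraph V} {s : Finset V} : s ∈ G.simplices ↔ G.IsSimplex s := by
  simp only [simplices, Finset.mem_filter, Finset.mem_powerset, and_iff_right_iff_imp]
  exact fun hs => hs.2.1

lemma remove_isSimplex_iff {G : FSGraph V} {x : V} {s : Finset V} :
    (G.remove x).IsSimplex s ↔ G.IsSimplex s ∧ x ∉ s := by
  simp only [IsSimplex, remove, induce, Finset.subset_iff, Finset.mem_filter]
  grind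

lemma simplices_remove (G : FSGraph V) (x : V) :
    (G.remove x).simplices = {s ∈ G.simplices | x ∉ s} := by
  ext s
  simp only [Finset.mem_filter, mem_simplices, remove_isSimplex_iff]

def link (G : FSGraph V) (s : Finset V) : FSGraph V :=
  G.induce (fun y => ∀ a ∈ s, G.Adj a y)

lemma mem_link_verts {G : FSGraph V} {s : Finset V} {y : V} :
    y ∈ (G.link s).verts ↔ y ∈ G.verts ∧ ∀ a ∈ s, G.Adj a y := by
  simp [link, induce]

lemma link_singleton (G : FSGraph V) (x : V) : G.link {x} = G.sphere x := by
  apply ext <;> simp [link, sphere, induce]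

lemma link_union (G : FSGraph V) {s u : Finset V} (hsu : ∀ a ∈ s, ∀ b ∈ u, G.Adj a b) :
    G.link (s ∪ u) = (G.link s).link u := by
  apply ext
  · ext y
    simp only [link, induce, Finset.mem_filter, Finset.mem_union]
    grind
  · intro a b
    simp only [link, induce, Finset.mem_union]
    grind

lemma link_isSimplex_iff {G : FSGraph V} {s u : Finset V} (hs : G.IsSimplex s)
    (hsu : Disjoint s u) : (G.link s).IsSimplex u ↔ u.Nonempty ∧ G.IsSimplex (s ∪ u) := by
  simp only [IsSimplex, link, induce, Finset.subset_iff, Finset.mem_filter, Finset.mem_union,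
    Finset.disjoint_left] at hs hsu ⊢
  refine ⟨fun ⟨hne, hsub, hcl⟩ => ⟨hne, hs.1.mono Finset.subset_union_left, ?_, ?_⟩,
    fun ⟨hne, _, hsub, hcl⟩ => ⟨hne, ?_, ?_⟩⟩ <;> grind [FSGraph.symm]

lemma euler_eq_neg_sum (G : FSGraph V) :
    G.euler = -∑ s ∈ G.simplices, (-1 : ℤ) ^ s.card := by
  rw [euler, ← Finset.sum_neg_distrib]
  refine Finset.sum_congr rfl fun s hs => ?_
  obtain ⟨n, hn⟩ := Nat.exists_eq_add_one_of_ne_zero (mem_simplices.mp hs).1.card_pos.ne'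
  rw [hn, pow_succ]
  simp

lemma sum_superset_neg_one_pow_card {G : FSGraph V} {s : Finset V} (hs : G.IsSimplex s) :
    ∑ t ∈ G.simplices with s ⊆ t, (-1 : ℤ) ^ t.card = (-1) ^ s.card * (1 - (G.link s).euler) := by
  have hdisj : ∀ u ∈ insert ∅ (G.link s).simplices, Disjoint s u := by
    simp only [Finset.mem_insert, mem_simplices, Finset.disjoint_right]
    rintro u (rfl | hu) y hy hys
    · simp at hy
    · exact G.loopless y ((mem_link_verts.mp (hu.2.1 hy)).2 y hys)
  calc ∑ t ∈ G.simplices with s ⊆ t, (-1 : ℤ) ^ t.card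
      = ∑ u ∈ insert ∅ (G.link s).simplices, (-1) ^ s.card * (-1) ^ u.card := by
        refine Finset.sum_nbij' (· \ s) (s ∪ ·) ?_ ?_ ?_ ?_ ?_
        · intro t ht
          obtain ⟨hts, hst⟩ := Finset.mem_filter.mp ht
          rcases (t \ s).eq_empty_or_nonempty with hempty | hne
          · simp [hempty]
          · refine Finset.mem_insert_of_mem (mem_simplices.mpr ?_)
            rw [link_isSimplex_iff hs Finset.disjoint_sdiff, Finset.union_sdiff_of_subset hst]
            exact ⟨hne, mem_simplices.mp hts⟩
        · intro u hu
          refine Finset.mem_filter.mpr ⟨mem_simplices.mpr ?_, Finset.subset_union_left⟩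
          rcases Finset.mem_insert.mp hu with rfl | hu
          · simpa using hs
          · exact ((link_isSimplex_iff hs (hdisj u (Finset.mem_insert_of_mem hu))).mp
              (mem_simplices.mp hu)).2
        · intro t ht
          exact Finset.union_sdiff_of_subset (Finset.mem_filter.mp ht).2
        · intro u hu
          exact Finset.union_sdiff_cancel_left (hdisj u hu)
        · intro t ht
          rw [← pow_add, add_comm, Finset.card_sdiff_add_card_eq_card (Finset.mem_filter.mp ht).2]
    _ = (-1) ^ s.card * (1 - (G.link s).euler) := by
        rw [← Finset.mul_sum, Finset.sum_insert, euler_eq_neg_sum]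
        · simp
        · simp [mem_simplices, IsSimplex]

lemma euler_eq_euler_remove_add (G : FSGraph V) {x : V} (hx : x ∈ G.verts) :
    G.euler = (G.remove x).euler + 1 - (G.sphere x).euler := by
  have hstar := sum_superset_neg_one_pow_card (s := {x}) (G := G) (by simpa [IsSimplex])
  simp only [Finset.singleton_subset_iff, Finset.card_singleton, link_singleton] at hstar
  rw [euler_eq_neg_sum, euler_eq_neg_sum (G.remove x), simplices_remove,
    ← Finset.sum_filter_add_sum_filter_not G.simplices (x ∈ ·), hstar]
  ring

lemma Contractible.euler_eq_one {G : FSGraph V} (h : Contractible G) : G.euler = 1 := by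
  induction h with
  | single G x h =>
    have : G.simplices = {{x}} := by
      ext s
      simp only [mem_simplices, IsSimplex, h, Finset.mem_singleton]
      grind [Finset.Nonempty.subset_singleton_iff]
    simp [euler, this]
  | step G x hx _ _ ihS ihR => rw [euler_eq_euler_remove_add G hx, ihS, ihR]; ring

lemma IsSphere.euler_eq {d : ℤ} {G : FSGraph V} (h : IsSphere d G) :
    G.euler = 1 + d.negOnePow := by
  induction h with
  | empty G h => simp [euler, simplices, h, Finset.filter_singleton, IsSimplex]
  | succ d G _ _ _ hpunct ih =>
    obtain ⟨x, hx, hc⟩ := hpunct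
    rw [euler_eq_euler_remove_add G hx, hc.euler_eq_one, ih x hx, Int.negOnePow_sub,
      Int.negOnePow_one]
    push_cast
    ring

lemma IsSphere.isDGraph {d : ℤ} {G : FSGraph V} (h : IsSphere d G) (hne : G.verts.Nonempty) :
    IsDGraph d G := by
  cases h with
  | empty _ h => exact absurd h hne.ne_empty
  | succ _ _ _ _ hunit _ => exact ⟨hne, hunit⟩

lemma IsDGraph.isSphere_link {d : ℤ} {G : FSGraph V} (hG : IsDGraph d G) {s : Finset V}
    (hs : G.IsSimplex s) : IsSphere (d - s.card) (G.link s) := by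
  obtain ⟨hne, hsub, hclique⟩ := hs
  induction hne using Finset.Nonempty.cons_induction generalizing G d with
  | singleton x => simpa [link_singleton] using hG.2 x (hsub (Finset.mem_singleton_self x))
  | cons x s hxs hne ih =>
    rw [Finset.cons_eq_insert] at hsub hclique
    have hx : G.IsSimplex {x} := by simpa [IsSimplex] using hsub (Finset.mem_insert_self x s)
    have hxs' : ∀ a ∈ ({x} : Finset V), ∀ b ∈ s, G.Adj a b := by
      simp only [Finset.mem_singleton, forall_eq]
      exact fun b hb => hclique x (Finset.mem_insert_self x s) b (Finset.mem_insert_of_mem hb)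
        (by rintro rfl; exact hxs hb)
    have hsx : (G.sphere x).IsSimplex s := by
      rw [← link_singleton, link_isSimplex_iff hx (Finset.disjoint_singleton_left.mpr hxs),
        ← Finset.insert_eq]
      exact ⟨hne, Finset.insert_nonempty x s, hsub, hclique⟩
    have hsphere := hG.2 x (hsub (Finset.mem_insert_self x s))
    have := ih (hsphere.isDGraph (hne.mono hsx.2.1)) hsx.2.1 hsx.2.2
    rw [Finset.cons_eq_insert, Finset.insert_eq, link_union G hxs', link_singleton,
      ← Finset.insert_eq, Finset.card_insert_of_notMem hxs]
    convert this using 1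
    push_cast
    ring

lemma IsDGraph.sum_superset_neg_one_pow_card {d : ℤ} {G : FSGraph V} (hG : IsDGraph d G)
    {s : Finset V} (hs : G.IsSimplex s) :
    ∑ t ∈ G.simplices with s ⊆ t, (-1 : ℤ) ^ t.card = -d.negOnePow := by
  rw [FSGraph.sum_superset_neg_one_pow_card hs, (hG.isSphere_link hs).euler_eq,
    Int.negOnePow_sub, Units.val_mul, Int.coe_negOnePow_natCast]
  have hsq : ((-1 : ℤ) ^ s.card) ^ 2 = 1 := by
    rw [← pow_mul, mul_comm, pow_mul, neg_one_sq, one_pow]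
  linear_combination (-(d.negOnePow : ℤ)) * hsq

lemma IsSimplex.simplices_filter_subset {G : FSGraph V} {t : Finset V} (ht : G.IsSimplex t) :
    {s ∈ G.simplices | s ⊆ t} = t.powerset.erase ∅ := by
  ext s
  simp only [Finset.mem_filter, mem_simplices, Finset.mem_erase, Finset.mem_powerset]
  refine ⟨fun ⟨hs, hst⟩ => ⟨hs.1.ne_empty, hst⟩, fun ⟨hne, hst⟩ => ⟨?_, hst⟩⟩
  exact ⟨Finset.nonempty_iff_ne_empty.mpr hne, hst.trans ht.2.1,
    fun a ha b hb => ht.2.2 a (hst ha) b (hst hb)⟩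

lemma IsSimplex.sum_subset_neg_one_pow_card {G : FSGraph V} {t : Finset V}
    (ht : G.IsSimplex t) : ∑ s ∈ G.simplices with s ⊆ t, (-1 : ℤ) ^ s.card = -1 := by
  rw [ht.simplices_filter_subset, Finset.sum_erase_eq_sub (Finset.empty_mem_powerset t),
    Finset.sum_powerset_neg_one_pow_card_of_nonempty ht.1]
  simp

lemma sum_mul_sum_superset (G : FSGraph V) :
    ∑ s ∈ G.simplices, (-1 : ℤ) ^ s.card * ∑ t ∈ G.simplices with s ⊆ t, (-1 : ℤ) ^ t.card
      = G.euler := by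
  simp_rw [Finset.mul_sum]
  rw [Finset.sum_comm' (t' := G.simplices) (s' := fun t => {s ∈ G.simplices | s ⊆ t})
    (by simp only [Finset.mem_filter]; tauto), euler_eq_neg_sum, ← Finset.sum_neg_distrib]
  refine Finset.sum_congr rfl fun t ht => ?_
  rw [← Finset.sum_mul, (mem_simplices.mp ht).sum_subset_neg_one_pow_card, neg_one_mul]

lemma IsDGraph.euler_eq_negOnePow_mul {d : ℤ} {G : FSGraph V} (hG : IsDGraph d G) :
    G.euler = d.negOnePow * G.euler := by
  calc G.euler
      = ∑ s ∈ G.simplices, (-1 : ℤ) ^ s.card * ∑ t ∈ G.simplices with s ⊆ t, (-1) ^ t.card :=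
        (sum_mul_sum_superset G).symm
    _ = ∑ s ∈ G.simplices, (-1 : ℤ) ^ s.card * -d.negOnePow :=
        Finset.sum_congr rfl fun s hs => by
          rw [hG.sum_superset_neg_one_pow_card (mem_simplices.mp hs)]
    _ = d.negOnePow * G.euler := by
        rw [euler_eq_neg_sum, ← Finset.sum_mul]
        ring

end FSGraph

/-- Every `d`-graph with odd `d` has Euler characteristic zero. -/
theorem euler_characteristic_of_odd_dgraph {V : Type} (d : ℤ) (hd : Odd d)
    (G : FSGraph V) (hG : FSGraph.IsDGraph d G) :
    G.euler = 0 := by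
  have h := hG.euler_eq_negOnePow_mul
  rw [Int.negOnePow_odd d hd, Units.val_neg, Units.val_one] at h
  linarith
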